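/- In the real/complex cone setup, for any h ∈ 𝒞_ℂ and any ℓ ∈ 𝒞'_ℂ, one has |ℓ(h)| ≥ e^{−δ_𝒞(h, 𝕖)} · (κ/√2) · ‖h‖ · |ℓ(𝕖)|. -/

import Mathlib

open Complex Set ENNReal

namespace ConeSetup

variable {B : Type*} [NormedAddCommGroup B] [NormedSpace ℝ B]

/-- Complex scalar multiplication on the complexification `B × B`:
`(a+ib)(x,y) = (ax − by, ay + bx)`. -/
def cSmul (z : ℂ) (p : B × B) : B × B :=
  (z.re • p.1 - z.im • p.2, z.re • p.2 + z.im • p.1)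

/-- The "real" norm `‖(x,y)‖_r = √(‖x‖² + ‖y‖²)` on the complexification. -/
noncomputable def rNorm (p : B × B) : ℝ :=
  Real.sqrt (‖p.1‖ ^ 2 + ‖p.2‖ ^ 2)

/-- The complexification norm `‖(x,y)‖ = sup_{θ∈[0,2π]} ‖e^{iθ}(x,y)‖_r`. -/
noncomputable def cNorm (p : B × B) : ℝ :=
  sSup ((fun θ : ℝ => rNorm (cSmul (Complex.exp (θ * Complex.I)) p)) ''
    Set.Icc 0 (2 * Real.pi))

/-- The real cone `𝒞_ℝ = {h ≠ 0 : ℓ(h) ≥ 0 for all ℓ ∈ S}`. -/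
def realCone (S : Set (B →L[ℝ] ℝ)) : Set B :=
  {h | h ≠ 0 ∧ ∀ ℓ ∈ S, 0 ≤ ℓ h}

/-- The complex cone `𝒞_ℂ = ℂ_* ⋅ (𝒞_ℝ + i 𝒞_ℝ)`. -/
def complexCone (S : Set (B →L[ℝ] ℝ)) : Set (B × B) :=
  {p | ∃ z : ℂ, z ≠ 0 ∧ ∃ x ∈ realCone S, ∃ y ∈ realCone S, p = cSmul z (x, y)}

/-- A map `B × B → ℂ` is a (continuous) complex-linear functional for the complex
structure `cSmul`. -/
def IsCLinearFunctional (ℓ : B × B → ℂ) : Prop :=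
  (∀ p q : B × B, ℓ (p + q) = ℓ p + ℓ q) ∧
  (∀ (z : ℂ) (p : B × B), ℓ (cSmul z p) = z * ℓ p) ∧
  Continuous ℓ

/-- The dual real cone `𝒞'_ℝ = {ℓ ∈ B'_ℝ : ℓ(h) ≥ 0 for all h ∈ 𝒞_ℝ}`. -/
def dualRealCone (S : Set (B →L[ℝ] ℝ)) : Set (B →L[ℝ] ℝ) :=
  {ℓ | ∀ h ∈ realCone S, 0 ≤ ℓ h}

/-- The dual complex cone `𝒞'_ℂ = {ℓ ∈ B'_ℂ : ℓ(h) ≠ 0 for all h ∈ 𝒞_ℂ}`. -/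
def dualComplexCone (S : Set (B →L[ℝ] ℝ)) : Set (B × B → ℂ) :=
  {ℓ | IsCLinearFunctional ℓ ∧ ∀ h ∈ complexCone S, ℓ h ≠ 0}

/-- The action of a real functional on the complexification: `ℓ(x+iy) = ℓ(x) + iℓ(y)`. -/
noncomputable def cext (ℓ : B →L[ℝ] ℝ) (p : B × B) : ℂ :=
  (ℓ p.1 : ℂ) + (ℓ p.2 : ℂ) * Complex.I

/-- `𝒞̊'_ℝ = {ℓ ∈ 𝒞'_ℝ : ℓ(x) > 0 for all x ∈ 𝒞_ℝ}`. -/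
def interiorDualRealCone (S : Set (B →L[ℝ] ℝ)) : Set (B →L[ℝ] ℝ) :=
  {ℓ | ℓ ∈ dualRealCone S ∧ ∀ x ∈ realCone S, 0 < ℓ x}

/-- `Ĉ'_ℂ = {±ℓ ± ip : ℓ, p ∈ 𝒞̊'_ℝ}`. -/
def hatDualComplexCone (S : Set (B →L[ℝ] ℝ)) : Set (B × B → ℂ) :=
  {q | ∃ ℓ ∈ interiorDualRealCone S, ∃ p ∈ interiorDualRealCone S,
    ∃ ε₁ ∈ ({1, -1} : Set ℝ), ∃ ε₂ ∈ ({1, -1} : Set ℝ),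
      q = fun v => (ε₁ : ℂ) * cext ℓ v + (ε₂ : ℂ) * Complex.I * cext p v}

/-- `E_𝒞(h,g) = {ℓ(h)/ℓ(g) : ℓ ∈ 𝒞'_ℂ}`. -/
def gaugeSet (S : Set (B →L[ℝ] ℝ)) (h g : B × B) : Set ℂ :=
  {z | ∃ ℓ ∈ dualComplexCone S, z = ℓ h / ℓ g}

/-- The projective gauge
`δ_𝒞(h,g) = ln( sup_{z∈E_𝒞(h,g)} |z| / inf_{z∈E_𝒞(h,g)} |z| ) = sup_{z,w∈E_𝒞(h,g)} ln|z/w|`,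
valued in `[0,∞]`. -/
noncomputable def deltaGauge (S : Set (B →L[ℝ] ℝ)) (h g : B × B) : ℝ≥0∞ :=
  ⨆ z ∈ gaugeSet S h g, ⨆ w ∈ gaugeSet S h g, ENNReal.ofReal (Real.log (‖z‖ / ‖w‖))

/-- The real/complex cone setup: a separating family `S` of functionals, an order unit `𝕖`
whose cone norm is the norm of `B`, and a functional `𝕞` in the weak-* closed convex hull
of `ℝ₊ ⋅ S` dominating the norm on the cone. -/
structure Setup (B : Type*) [NormedAddCommGroup B] [NormedSpace ℝ B] where
  S : Set (B →L[ℝ] ℝ)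
  e : B
  mm : B →L[ℝ] ℝ
  κ : ℝ
  separating : ∀ x : B, (∀ ℓ ∈ S, ℓ x = 0) → x = 0
  e_mem : e ∈ realCone S
  arch : ∀ h : B, ∃ l : ℝ, 0 ≤ l ∧ ∀ ℓ ∈ S, 0 ≤ ℓ (l • e - h)
  norm_eq : ∀ h : B,
    ‖h‖ = sInf {l : ℝ | 0 ≤ l ∧ ∀ ℓ ∈ S, 0 ≤ ℓ (l • e - h) ∧ 0 ≤ ℓ (l • e + h)}
  κ_pos : 0 < κ
  κ_lt_one : κ < 1
  mm_e : mm e = 1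
  mm_lower : ∀ h ∈ realCone S, κ * ‖h‖ ≤ mm h
  mm_star : (⇑mm : B → ℝ) ∈ closure ((fun ℓ : B →L[ℝ] ℝ => (⇑ℓ : B → ℝ)) ''
    convexHull ℝ {q : B →L[ℝ] ℝ | ∃ c : ℝ, 0 ≤ c ∧ ∃ ℓ ∈ S, q = c • ℓ})

/-!
The complexification `ℓ₀(x + iy) = 𝕞(x) + i𝕞(y)` of `𝕞` lies in `𝒞'_ℂ` and satisfies
`ℓ₀(𝕖) = 1`, so the definition of `δ_𝒞` compares `|ℓ(h)/ℓ(𝕖)|` with `|ℓ₀(h)|`: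
`|ℓ(h)| ≥ e^{−δ_𝒞(h,𝕖)} |ℓ₀(h)| |ℓ(𝕖)|`. For `h = z(x + iy)` with `x, y ∈ 𝒞_ℝ`,
`|ℓ₀(h)| = |z| √(𝕞(x)² + 𝕞(y)²) ≥ κ |z| ‖x + iy‖_r`, while a rotation `e^{iθ}` multiplies
`‖·‖_r` by at most `√2`, so `‖h‖ ≤ √2 |z| ‖x + iy‖_r`.
-/

lemma cSmul_cSmul (w z : ℂ) (p : B × B) : cSmul w (cSmul z p) = cSmul (w * z) p := by
  simp only [cSmul, Complex.mul_re, Complex.mul_im, Prod.mk.injEq]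
  constructor <;> module

lemma norm_smul_add_smul_sq_le (a b : ℝ) (x y : B) :
    ‖a • x + b • y‖ ^ 2 ≤ (a ^ 2 + b ^ 2) * (‖x‖ ^ 2 + ‖y‖ ^ 2) := by
  have htri : ‖a • x + b • y‖ ≤ |a| * ‖x‖ + |b| * ‖y‖ := by
    simpa only [norm_smul, Real.norm_eq_abs] using norm_add_le (a • x) (b • y)
  have hcs : (|a| * ‖x‖ + |b| * ‖y‖) ^ 2 ≤ (a ^ 2 + b ^ 2) * (‖x‖ ^ 2 + ‖y‖ ^ 2) := by
    nlinarith [sq_nonneg (|a| * ‖y‖ - |b| * ‖x‖), sq_abs a, sq_abs b]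
  exact (pow_le_pow_left₀ (norm_nonneg _) htri 2).trans hcs

lemma rNorm_cSmul_le (z : ℂ) (p : B × B) :
    rNorm (cSmul z p) ≤ Real.sqrt 2 * ‖z‖ * rNorm p := by
  have h₁ := norm_smul_add_smul_sq_le z.re (-z.im) p.1 p.2
  have h₂ := norm_smul_add_smul_sq_le z.re z.im p.2 p.1
  rw [neg_smul, ← sub_eq_add_neg, neg_sq] at h₁
  have hz : ‖z‖ = Real.sqrt (z.re ^ 2 + z.im ^ 2) := by
    rw [Complex.norm_def, Complex.normSq_apply]; ring_nf
  rw [hz, rNorm, rNorm, ← Real.sqrt_mul zero_le_two, ← Real.sqrt_mul (by positivity)]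
  exact Real.sqrt_le_sqrt (by simp only [cSmul]; nlinarith)

lemma cNorm_cSmul_le (z : ℂ) (p : B × B) :
    cNorm (cSmul z p) ≤ Real.sqrt 2 * ‖z‖ * rNorm p := by
  refine Real.sSup_le ?_ (by unfold rNorm; positivity)
  rintro r ⟨θ, -, rfl⟩
  dsimp only
  rw [cSmul_cSmul]
  refine (rNorm_cSmul_le _ _).trans_eq ?_
  rw [norm_mul, Complex.norm_exp_ofReal_mul_I, one_mul]

lemma cext_cSmul (ℓ : B →L[ℝ] ℝ) (z : ℂ) (p : B × B) :
    cext ℓ (cSmul z p) = z * cext ℓ p := by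
  apply Complex.ext <;> simp [cext, cSmul]

lemma norm_cext (ℓ : B →L[ℝ] ℝ) (p : B × B) :
    ‖cext ℓ p‖ = Real.sqrt (ℓ p.1 ^ 2 + ℓ p.2 ^ 2) :=
  Complex.norm_add_mul_I _ _

lemma cext_mem_dualComplexCone {S : Set (B →L[ℝ] ℝ)} {ℓ : B →L[ℝ] ℝ}
    (hℓ : ∀ x ∈ realCone S, 0 < ℓ x) : cext ℓ ∈ dualComplexCone S := by
  refine ⟨⟨fun p q => ?_, cext_cSmul ℓ, by unfold cext; fun_prop⟩, ?_⟩
  · simp only [cext, Prod.fst_add, Prod.snd_add, map_add]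
    push_cast
    ring
  · rintro _ ⟨z, hz, x, hx, y, -, rfl⟩
    rw [cext_cSmul]
    refine mul_ne_zero hz fun h0 => (hℓ x hx).ne' ?_
    simpa [cext] using congrArg Complex.re h0

lemma mk_zero_mem_complexCone {S : Set (B →L[ℝ] ℝ)} {x : B} (hx : x ∈ realCone S) :
    (x, (0 : B)) ∈ complexCone S := by
  refine ⟨(1 - Complex.I) / 2, ?_, x, hx, x, hx, ?_⟩
  · intro h0
    simpa using congrArg Complex.re h0
  · simp only [cSmul, Prod.mk.injEq]
    norm_num
    module

lemma exp_neg_deltaGauge_mul_le {S : Set (B →L[ℝ] ℝ)} {h g : B × B} {z w : ℂ}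
    (hz : z ∈ gaugeSet S h g) (hw : w ∈ gaugeSet S h g) (hw0 : w ≠ 0)
    (hδ : deltaGauge S h g ≠ ⊤) :
    Real.exp (-(deltaGauge S h g).toReal) * ‖z‖ ≤ ‖w‖ := by
  rcases eq_or_ne z 0 with rfl | hz0
  · simp
  have hlog : Real.log (‖z‖ / ‖w‖) ≤ (deltaGauge S h g).toReal := by
    refine ENNReal.ofReal_le_iff_le_toReal hδ |>.1 ?_
    exact le_iSup₂_of_le z hz (le_iSup₂_of_le w hw le_rfl)
  rw [Real.log_le_iff_le_exp (by positivity), div_le_iff₀ (by positivity)] at hlog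
  rw [Real.exp_neg, inv_mul_le_iff₀ (Real.exp_pos _)]
  linarith

namespace Setup

lemma mm_pos (st : Setup B) : ∀ x ∈ realCone st.S, 0 < st.mm x := fun x hx =>
  (mul_pos st.κ_pos (norm_pos_iff.2 hx.1)).trans_le (st.mm_lower x hx)

lemma cext_mm_e (st : Setup B) : cext st.mm (st.e, 0) = 1 := by
  simp [cext, st.mm_e]

lemma cNorm_le_norm_cext_mm (st : Setup B) {h : B × B} (hh : h ∈ complexCone st.S) :
    st.κ / Real.sqrt 2 * cNorm h ≤ ‖cext st.mm h‖ := by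
  obtain ⟨z, -, x, hx, y, hy, rfl⟩ := hh
  have hm : st.κ * rNorm (x, y) ≤ Real.sqrt (st.mm x ^ 2 + st.mm y ^ 2) := by
    rw [rNorm, ← Real.sqrt_sq st.κ_pos.le, ← Real.sqrt_mul (sq_nonneg _)]
    refine Real.sqrt_le_sqrt ?_
    dsimp only
    nlinarith [pow_le_pow_left₀ (mul_nonneg st.κ_pos.le (norm_nonneg _)) (st.mm_lower x hx) 2,
      pow_le_pow_left₀ (mul_nonneg st.κ_pos.le (norm_nonneg _)) (st.mm_lower y hy) 2]
  calc st.κ / Real.sqrt 2 * cNorm (cSmul z (x, y))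
      ≤ st.κ / Real.sqrt 2 * (Real.sqrt 2 * ‖z‖ * rNorm (x, y)) :=
        mul_le_mul_of_nonneg_left (cNorm_cSmul_le z (x, y))
          (div_nonneg st.κ_pos.le (Real.sqrt_nonneg 2))
    _ = ‖z‖ * (st.κ * rNorm (x, y)) := by field_simp
    _ ≤ ‖cext st.mm (cSmul z (x, y))‖ := by
        rw [cext_cSmul, norm_mul, norm_cext]
        gcongr

end Setup

theorem dual_functional_lower_bound_general {B : Type*} [NormedAddCommGroup B]
    [NormedSpace ℝ B] (st : Setup B) :
    ∀ h ∈ complexCone st.S, ∀ ℓ ∈ dualComplexCone st.S,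
      deltaGauge st.S h (st.e, (0 : B)) = ⊤ ∨
      Real.exp (-(deltaGauge st.S h (st.e, (0 : B))).toReal) * (st.κ / Real.sqrt 2) *
          cNorm h * ‖ℓ (st.e, (0 : B))‖ ≤ ‖ℓ h‖ := by
  intro h hh ℓ hℓ
  refine or_iff_not_imp_left.2 fun hδ => ?_
  have hℓe : ℓ (st.e, 0) ≠ 0 := hℓ.2 _ (mk_zero_mem_complexCone st.e_mem)
  have hgauge := exp_neg_deltaGauge_mul_le ⟨_, cext_mem_dualComplexCone st.mm_pos, rfl⟩
    ⟨ℓ, hℓ, rfl⟩ (div_ne_zero (hℓ.2 h hh) hℓe) hδ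
  rw [st.cext_mm_e, div_one, norm_div, le_div_iff₀ (norm_pos_iff.2 hℓe)] at hgauge
  set c := Real.exp (-(deltaGauge st.S h (st.e, 0)).toReal)
  calc c * (st.κ / Real.sqrt 2) * cNorm h * ‖ℓ (st.e, 0)‖
      = c * (st.κ / Real.sqrt 2 * cNorm h) * ‖ℓ (st.e, 0)‖ := by ring
    _ ≤ c * ‖cext st.mm h‖ * ‖ℓ (st.e, 0)‖ := by
        gcongr
        exact st.cNorm_le_norm_cext_mm hh
    _ ≤ ‖ℓ h‖ := hgauge

/-- **Lemma 5.15 (partial converse to the dual norm bound).** For `h ∈ 𝒞_ℂ` and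
`ℓ ∈ 𝒞'_ℂ`, `|ℓ(h)| ≥ e^{−δ_𝒞(h,𝕖)} (κ/√2) ‖h‖ |ℓ(𝕖)|` (trivially true when
`δ_𝒞(h,𝕖) = ∞`). -/
theorem dual_functional_lower_bound {B : Type*} [NormedAddCommGroup B]
    [NormedSpace ℝ B] [CompleteSpace B] (st : Setup B) :
    ∀ h ∈ complexCone st.S, ∀ ℓ ∈ dualComplexCone st.S,
      deltaGauge st.S h (st.e, (0 : B)) = ⊤ ∨
      Real.exp (-(deltaGauge st.S h (st.e, (0 : B))).toReal) * (st.κ / Real.sqrt 2) *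
          cNorm h * ‖ℓ (st.e, (0 : B))‖ ≤ ‖ℓ h‖ :=
  dual_functional_lower_bound_general st

end ConeSetup
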